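/- Let d ≥ 2 be a real number and suppose that for every P5-free graph G with χ(G) ≥ 2^d, G contains either (a) a complete pair (X,Y) with χ(X) ≥ y^d·χ(G) and χ(Y) ≥ (1−y)·χ(G) for some y ∈ (0,1), or (b) a complete blockade (B_1,…,B_k) with k ≥ 2 and χ(B_i) ≥ k^{−d}·χ(G) for all i ∈ [k]. Then every P5-free graph G satisfies χ(G) ≤ ω(G)^d. -/

import Mathlib

open SimpleGraph

/-- The chromatic number of the subgraph of `G` induced on `S`, as a natural number. -/
noncomputable def chiS {V : Type*} [Fintype V] (G : SimpleGraph V) (S : Set V) : ℕ :=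
  (G.induce S).chromaticNumber.toNat

/-- A graph is `P5`-free if it has no induced subgraph isomorphic to the five-vertex path. -/
def P5Free {V : Type*} (G : SimpleGraph V) : Prop :=
  IsEmpty (SimpleGraph.pathGraph 5 ↪g G)

/-- The clique number of a graph. -/
noncomputable def omegaNum {V : Type*} (G : SimpleGraph V) : ℕ :=
  sSup {n | ∃ t : Finset V, G.IsNClique n t}

/-!
Induction on `ω(G)`. If `χ(G) ≤ 1`, or `χ(G) < 2^d ≤ ω(G)^d`, there is nothing to prove.
Otherwise the hypothesis yields a complete pair or a complete blockade, and maximum cliques of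
the parts of a complete blockade combine into a clique of `G`, so their clique numbers add up
to at most `ω(G)`. Hence some part `S` has `ω(S) ≤ t·ω(G)` with `0 < t < 1` and
`χ(S) ≥ t^d·χ(G)`: for a pair, `S = X` with `t = y` or `S = Y` with `t = 1 - y` (using
`(1-y)^d ≤ 1-y` as `d ≥ 1`); for a blockade, the part with the smallest clique number and
`t = 1/k`. By induction `t^d·χ(G) ≤ χ(S) ≤ ω(S)^d ≤ t^d·ω(G)^d`.
-/

theorem P5Free.induce {V : Type*} {G : SimpleGraph V} (hG : P5Free G) (S : Set V) :
    P5Free (G.induce S) :=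
  ⟨fun e ↦ hG.false ((Embedding.induce S).comp e)⟩

theorem le_rpow_of_le_mul {d t a ω χ : ℝ} (hd : 0 ≤ d) (ht : 0 < t) (ha : 0 ≤ a)
    (haω : a ≤ t * ω) (h : t ^ d * χ ≤ a ^ d) : χ ≤ ω ^ d := by
  have hω : 0 ≤ ω := nonneg_of_mul_nonneg_right (ha.trans haω) ht
  refine le_of_mul_le_mul_left ?_ (Real.rpow_pos_of_pos ht d)
  calc t ^ d * χ ≤ a ^ d := h
    _ ≤ (t * ω) ^ d := Real.rpow_le_rpow ha haω hd
    _ = t ^ d * ω ^ d := Real.mul_rpow ht.le hω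

namespace SimpleGraph

open Finset

variable {V : Type*}

section CliqueNumber

variable [Finite V]

theorem IsClique.card_le_omegaNum {G : SimpleGraph V} {t : Finset V}
    (h : G.IsClique (t : Set V)) : #t ≤ omegaNum G :=
  IsClique.card_le_cliqueNum (tc := h)

variable (G : SimpleGraph V)

theorem sum_omegaNum_induce_le {ι : Type*} [Fintype ι] (B : ι → Set V)
    (hB : ∀ i j, i ≠ j → ∀ a ∈ B i, ∀ b ∈ B j, G.Adj a b) :
    ∑ i, omegaNum (G.induce (B i)) ≤ omegaNum G := by
  classical
  choose t ht using fun i ↦ (G.induce (B i)).exists_isNClique_cliqueNum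
  let s i := (t i).map (.subtype _)
  have hs i : G.IsNClique (omegaNum (G.induce (B i))) (s i) :=
    (isNClique_induce_iff _ _ _).1 (ht i)
  have hsB i : ∀ a ∈ s i, a ∈ B i := by
    intro a ha
    obtain ⟨x, -, rfl⟩ := mem_map.1 ha
    exact x.2
  have hclique : G.IsClique (univ.biUnion s : Set V) := by
    intro a ha b hb hab
    obtain ⟨i, -, hai⟩ := mem_biUnion.1 (mem_coe.1 ha)
    obtain ⟨j, -, hbj⟩ := mem_biUnion.1 (mem_coe.1 hb)
    by_cases hij : i = j
    · subst hij
      exact (hs i).isClique hai hbj hab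
    · exact hB i j hij a (hsB i a hai) b (hsB j b hbj)
  have hdisj : ∀ i j, i ≠ j → Disjoint (s i) (s j) := fun i j hij ↦
    Finset.disjoint_left.2 fun a hai haj ↦ (hB i j hij a (hsB i a hai) a (hsB j a haj)).ne rfl
  calc ∑ i, omegaNum (G.induce (B i)) = #(univ.biUnion s) := by
        rw [card_biUnion fun i _ j _ ↦ hdisj i j]
        simp [(hs _).card_eq]
    _ ≤ omegaNum G := hclique.card_le_omegaNum

theorem omegaNum_induce_add_le {X Y : Set V} (hXY : ∀ x ∈ X, ∀ y ∈ Y, G.Adj x y) :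
    omegaNum (G.induce X) + omegaNum (G.induce Y) ≤ omegaNum G := by
  simpa using G.sum_omegaNum_induce_le ![X, Y] (by
    intro i j hij
    fin_cases i <;> fin_cases j <;> simp only [ne_eq, not_true_eq_false] at hij
    · simpa using hXY
    · simpa using fun y hy x hx ↦ (hXY x hx y hy).symm)

theorem two_le_omegaNum_of_adj {u v : V} (h : G.Adj u v) : 2 ≤ omegaNum G := by
  classical
  simpa [card_pair h.ne] using IsClique.card_le_omegaNum (t := {u, v})
    (by simpa using isClique_pair.2 fun _ ↦ h)

end CliqueNumber

section ChromaticNumber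

variable [Fintype V] (G : SimpleGraph V)

theorem chiS_univ : chiS G Set.univ = G.chromaticNumber.toNat :=
  congrArg ENat.toNat (chromaticNumber_congr (induceUnivIso G))

theorem chiS_induce_univ (S : Set V) [Fintype S] : chiS (G.induce S) Set.univ = chiS G S :=
  chiS_univ _

theorem chiS_univ_le_omegaNum_rpow_of_le_one {d : ℝ} (hd : 0 ≤ d) (h : chiS G Set.univ ≤ 1) :
    (chiS G Set.univ : ℝ) ≤ omegaNum G ^ d := by
  cases isEmpty_or_nonempty V
  · simp [chiS_univ, chromaticNumber_eq_zero_of_isEmpty, Real.rpow_nonneg]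
  · obtain ⟨v⟩ := ‹Nonempty V›
    have hω : 1 ≤ omegaNum G := by
      simpa using IsClique.card_le_omegaNum (G := G) (t := {v}) (by simp)
    calc (chiS G Set.univ : ℝ) ≤ 1 := by exact_mod_cast h
      _ ≤ omegaNum G ^ d := Real.one_le_rpow (by exact_mod_cast hω) hd

theorem two_le_omegaNum_of_one_lt_chiS (h : 1 < chiS G Set.univ) : 2 ≤ omegaNum G := by
  have h2 : 2 ≤ G.chromaticNumber := by
    rw [chiS_univ] at h
    exact (ENat.natCast_le_natCast.2 h).trans (ENat.natCast_toNat_le_self _)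
  obtain ⟨u, v, huv⟩ := ne_bot_iff_exists_adj.1 (two_le_chromaticNumber_iff_ne_bot.1 h2)
  exact G.two_le_omegaNum_of_adj huv

end ChromaticNumber

section InductiveStep

variable [Fintype V] {G : SimpleGraph V} {d : ℝ}

theorem chiS_univ_le_of_omegaNum_induce_le_mul
    (hind : ∀ S : Set V, omegaNum (G.induce S) < omegaNum G →
      (chiS G S : ℝ) ≤ omegaNum (G.induce S) ^ d)
    (hd : 0 ≤ d) (hω : 0 < omegaNum G) {S : Set V} {t : ℝ} (ht0 : 0 < t) (ht1 : t < 1)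
    (hS : (omegaNum (G.induce S) : ℝ) ≤ t * omegaNum G)
    (hχ : t ^ d * chiS G Set.univ ≤ chiS G S) :
    (chiS G Set.univ : ℝ) ≤ omegaNum G ^ d := by
  have hlt : omegaNum (G.induce S) < omegaNum G := by
    have : t * omegaNum G < omegaNum G := mul_lt_of_lt_one_left (by exact_mod_cast hω) ht1
    exact_mod_cast hS.trans_lt this
  exact le_rpow_of_le_mul hd ht0 (Nat.cast_nonneg _) hS (hχ.trans (hind S hlt))

theorem chiS_univ_le_of_complete_pair
    (hind : ∀ S : Set V, omegaNum (G.induce S) < omegaNum G →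
      (chiS G S : ℝ) ≤ omegaNum (G.induce S) ^ d)
    (hd : 1 ≤ d) (hω : 0 < omegaNum G) {X Y : Set V} (hXY : ∀ x ∈ X, ∀ y ∈ Y, G.Adj x y)
    {y : ℝ} (hy0 : 0 < y) (hy1 : y < 1) (hX : y ^ d * chiS G Set.univ ≤ chiS G X)
    (hY : (1 - y) * chiS G Set.univ ≤ chiS G Y) :
    (chiS G Set.univ : ℝ) ≤ omegaNum G ^ d := by
  have hsum : (omegaNum (G.induce X) : ℝ) + omegaNum (G.induce Y) ≤ omegaNum G := by
    exact_mod_cast G.omegaNum_induce_add_le hXY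
  by_cases hXsmall : (omegaNum (G.induce X) : ℝ) ≤ y * omegaNum G
  · exact chiS_univ_le_of_omegaNum_induce_le_mul hind (by linarith) hω hy0 hy1 hXsmall hX
  · refine chiS_univ_le_of_omegaNum_induce_le_mul hind (by linarith) hω (sub_pos.2 hy1)
      (by linarith) (by linarith) ?_
    calc (1 - y) ^ d * chiS G Set.univ ≤ (1 - y) * chiS G Set.univ :=
          mul_le_mul_of_nonneg_right
            (Real.rpow_le_self_of_le_one (by linarith) (by linarith) hd) (Nat.cast_nonneg _)
      _ ≤ chiS G Y := hY

theorem chiS_univ_le_of_complete_blockade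
    (hind : ∀ S : Set V, omegaNum (G.induce S) < omegaNum G →
      (chiS G S : ℝ) ≤ omegaNum (G.induce S) ^ d)
    (hd : 0 ≤ d) (hω : 0 < omegaNum G) {ι : Type*} [Fintype ι] (hι : 1 < Fintype.card ι)
    {B : ι → Set V} (hB : ∀ i j, i ≠ j → ∀ a ∈ B i, ∀ b ∈ B j, G.Adj a b)
    (hχ : ∀ i, (Fintype.card ι : ℝ) ^ (-d) * chiS G Set.univ ≤ chiS G (B i)) :
    (chiS G Set.univ : ℝ) ≤ omegaNum G ^ d := by
  have : Nonempty ι := Fintype.card_pos_iff.1 (by omega)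
  set k := Fintype.card ι
  have hk : (1 : ℝ) < k := by exact_mod_cast hι
  obtain ⟨i, hi⟩ := Finite.exists_min fun j ↦ omegaNum (G.induce (B j))
  have hki : k * omegaNum (G.induce (B i)) ≤ omegaNum G :=
    calc k * omegaNum (G.induce (B i)) = ∑ _j : ι, omegaNum (G.induce (B i)) := by simp [k]
      _ ≤ ∑ j, omegaNum (G.induce (B j)) := sum_le_sum fun j _ ↦ hi j
      _ ≤ omegaNum G := G.sum_omegaNum_induce_le B hB
  refine chiS_univ_le_of_omegaNum_induce_le_mul hind hd hω (S := B i) (t := (k : ℝ)⁻¹)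
    (by positivity) (inv_lt_one_of_one_lt₀ hk) ?_ ?_
  · rw [inv_mul_eq_div, le_div_iff₀ (by positivity), mul_comm]
    exact_mod_cast hki
  · rw [Real.inv_rpow (by positivity), ← Real.rpow_neg (by positivity)]
    exact hχ i

end InductiveStep

end SimpleGraph

theorem stmt_4.{u} (d : ℝ) (hd : 2 ≤ d)
    (hyp : ∀ (W : Type u) [Fintype W] (H : SimpleGraph W), P5Free H →
      (2 : ℝ) ^ d ≤ (chiS H Set.univ : ℝ) →
      (∃ X Y : Set W, X.Nonempty ∧ Y.Nonempty ∧ Disjoint X Y ∧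
        (∀ x ∈ X, ∀ z ∈ Y, H.Adj x z) ∧
        ∃ y : ℝ, 0 < y ∧ y < 1 ∧
          y ^ d * (chiS H Set.univ : ℝ) ≤ (chiS H X : ℝ) ∧
          (1 - y) * (chiS H Set.univ : ℝ) ≤ (chiS H Y : ℝ)) ∨
      (∃ k : ℕ, 2 ≤ k ∧ ∃ B : Fin k → Set W,
        (∀ i j, i ≠ j → Disjoint (B i) (B j)) ∧
        (∀ i j, i ≠ j → ∀ a ∈ B i, ∀ b ∈ B j, H.Adj a b) ∧
        ∀ i, (k : ℝ) ^ (-d) * (chiS H Set.univ : ℝ) ≤ (chiS H (B i) : ℝ))) :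
    ∀ (V : Type u) [Fintype V] (G : SimpleGraph V), P5Free G →
      (chiS G Set.univ : ℝ) ≤ (omegaNum G : ℝ) ^ d := by
  have hd0 : 0 ≤ d := by linarith
  intro V _ G hG
  induction h : omegaNum G using Nat.strong_induction_on generalizing V with
  | _ n IH =>
  subst h
  have hind (S : Set V) (hS : omegaNum (G.induce S) < omegaNum G) :
      (chiS G S : ℝ) ≤ omegaNum (G.induce S) ^ d := by
    have := Fintype.ofFinite S
    rw [← chiS_induce_univ]
    exact IH _ hS S (G.induce S) (hG.induce S) rfl
  rcases le_or_gt (chiS G Set.univ) 1 with hχ1 | hχ1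
  · exact G.chiS_univ_le_omegaNum_rpow_of_le_one hd0 hχ1
  have hω2 := G.two_le_omegaNum_of_one_lt_chiS hχ1
  rcases lt_or_ge (chiS G Set.univ : ℝ) (2 ^ d) with hsmall | hlarge
  · exact hsmall.le.trans (Real.rpow_le_rpow zero_le_two (by exact_mod_cast hω2) hd0)
  rcases hyp V G hG hlarge with
    ⟨X, Y, -, -, -, hXY, y, hy0, hy1, hX, hY⟩ | ⟨k, hk, B, -, hB, hχB⟩
  · exact chiS_univ_le_of_complete_pair hind (by linarith) (by omega) hXY hy0 hy1 hX hY
  · exact chiS_univ_le_of_complete_blockade hind hd0 (by omega)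
      (by rw [Fintype.card_fin]; omega) hB (by simpa using hχB)
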